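/- arXiv:1501.04526 — 2 statements merged into one kernel-verified Lean document; each statement's English description precedes it below -/
import Mathlib

section
/- Let W_p be the group scheme over Z whose underlying scheme is the affine plane and whose group law is (x,y)·(x',y') = (x + x', y + y' + ((x + x')^p − x^p − x'^p)/p) (the additive group of Witt vectors of length 2). For a commutative ring R, the base change W_p ×_Z R is isomorphic as an R-group scheme to G_a,R² if and only if p is invertible in R. Consequently, for distinct primes p and q the group schemes W_p and W_q over Z are not isomorphic, so there are infinitely many pairwise non-isomorphic smooth commutative unipotent group schemes of dimension 2 over Z. -/
noncomputable section

open MvPolynomial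

/-- The Witt group law of length-two Witt vectors on the affine plane:
`(x, y) · (x', y') = (x + x', y + y' + c(x, x'))`, where `c` is the integral polynomial
`((X + X')^p − X^p − X'^p) / p` (passed here as any polynomial `c` with
`p • c = (X + X')^p − X^p − X'^p`). -/
def wittMul (c : MvPolynomial (Fin 2) ℤ) (A : Type) [CommRing A] (v w : A × A) : A × A :=
  (v.1 + w.1,
    v.2 + w.2 + MvPolynomial.aeval (fun i : Fin 2 => if i = 0 then v.1 else w.1) c)

/-- An isomorphism over `R` between the two affine-plane group schemes with group laws
`m₁` and `m₂`, described via functors of points: a family of bijections of the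
`A`-points `A × A`, natural in the `R`-algebra `A` and respecting the group laws.
By the Yoneda lemma (both schemes being affine over `R`), this is the same as an
isomorphism of group schemes over `R`. -/
structure PlaneGrpIso (m₁ m₂ : ∀ (A : Type) [CommRing A], A × A → A × A → A × A)
    (R : Type) [CommRing R] where
  e : ∀ (A : Type) [CommRing A] [Algebra R A], A × A ≃ A × A
  e_mul : ∀ (A : Type) [CommRing A] [Algebra R A] (v w : A × A),
      e A (m₁ A v w) = m₂ A (e A v) (e A w)
  e_natural : ∀ (A A' : Type) [CommRing A] [CommRing A'] [Algebra R A] [Algebra R A']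
      (f : A →ₐ[R] A') (v : A × A),
      e A' (f v.1, f v.2) = (f (e A v).1, f (e A v).2)

/-- The data of a length-two Witt vector group scheme `W_p` over `ℤ`: a prime `p`
together with the polynomial `((X + X')^p − X^p − X'^p) / p` defining its group law. -/
def WittDatum : Type :=
  {pc : ℕ × MvPolynomial (Fin 2) ℤ //
    pc.1.Prime ∧ (pc.1 : ℤ) • pc.2 = (X 0 + X 1) ^ pc.1 - X 0 ^ pc.1 - X 1 ^ pc.1}

/-! If `p` is invertible, `(x, y) ↦ (x, y - x ^ p / p)` turns the Witt law into addition.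
Conversely, over `k = R ⧸ (p) ≠ 0` the point `(X, 0)` of `W_p(k[X])` has `p`-th power
`(0, -X ^ p) ≠ 0`, whereas `k[X]²` is killed by `p`, so `W_p ×_ℤ R` is not `𝔾ₐ²`. For primes
`q ≠ p`, `q` is a unit in `𝔽_p`, so an isomorphism `W_p ≅ W_q` over `ℤ` would base-change to
`W_p ≅ W_q ≅ 𝔾ₐ²` over `𝔽_p`. -/

namespace PlaneGrpIso

variable {m₁ m₂ m₃ : ∀ (A : Type) [CommRing A], A × A → A × A → A × A}

def trans {R : Type} [CommRing R] (e₁ : PlaneGrpIso m₁ m₂ R) (e₂ : PlaneGrpIso m₂ m₃ R) :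
    PlaneGrpIso m₁ m₃ R where
  e A _ _ := (e₁.e A).trans (e₂.e A)
  e_mul A _ _ v w := by simp [e₁.e_mul, e₂.e_mul]
  e_natural A A' _ _ _ _ f v := by simp [e₁.e_natural, e₂.e_natural]

def baseChange (e : PlaneGrpIso m₁ m₂ ℤ) (R : Type) [CommRing R] : PlaneGrpIso m₁ m₂ R where
  e A _ _ := e.e A
  e_mul A _ _ := e.e_mul A
  e_natural A A' _ _ _ _ f := e.e_natural A A' f.toRingHom.toIntAlgHom

end PlaneGrpIso

section WittLaw

variable {c : MvPolynomial (Fin 2) ℤ} {p : ℕ}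

variable (c) in
def wittPow (A : Type) [CommRing A] (v : A × A) : ℕ → A × A
  | 0 => (0, 0)
  | n + 1 => wittMul c A (wittPow A v n) v

variable (c) in
lemma map_wittMul {A B : Type} [CommRing A] [CommRing B] (f : A →+* B) (v w : A × A) :
    wittMul c B (Prod.map f f v) (Prod.map f f w) = Prod.map f f (wittMul c A v w) := by
  refine Prod.ext (map_add f _ _).symm ?_
  simp only [wittMul, Prod.map, map_add, add_right_inj]
  rw [← f.toIntAlgHom_apply (aeval _ c), comp_aeval_apply]
  congr 2 with i
  split <;> rfl

variable (c) in
lemma map_wittPow {A B : Type} [CommRing A] [CommRing B] (f : A →+* B) (v : A × A) (n : ℕ) :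
    wittPow c B (Prod.map f f v) n = Prod.map f f (wittPow c A v n) := by
  induction n with
  | zero => simp [wittPow]
  | succ n ih => rw [wittPow, ih, map_wittMul, wittPow]

lemma wittMul_zero_zero (hp : p ≠ 0)
    (hc : (p : ℤ) • c = (X 0 + X 1) ^ p - X 0 ^ p - X 1 ^ p) (A : Type) [CommRing A] :
    wittMul c A 0 0 = 0 := by
  have hc₀ : constantCoeff c = 0 := by
    simpa [smul_eq_C_mul, zero_pow hp, hp] using congrArg constantCoeff hc
  ext
  · simp [wittMul]
  · simp [wittMul, aeval_zero', hc₀]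

lemma natCast_mul_aeval (hc : (p : ℤ) • c = (X 0 + X 1) ^ p - X 0 ^ p - X 1 ^ p)
    {A : Type} [CommRing A] (a b : A) :
    (p : A) * aeval (fun i : Fin 2 => if i = 0 then a else b) c = (a + b) ^ p - a ^ p - b ^ p := by
  simpa [zsmul_eq_mul] using congrArg (aeval fun i : Fin 2 => if i = 0 then a else b) hc

lemma wittPow_X (hp : p ≠ 0) (hc : (p : ℤ) • c = (X 0 + X 1) ^ p - X 0 ^ p - X 1 ^ p) (n : ℕ) :
    (wittPow c (Polynomial ℤ) (Polynomial.X, 0) n).1 = (n : Polynomial ℤ) * Polynomial.X ∧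
      (p : Polynomial ℤ) * (wittPow c (Polynomial ℤ) (Polynomial.X, 0) n).2
        = ((n : Polynomial ℤ) ^ p - (n : Polynomial ℤ)) * Polynomial.X ^ p := by
  induction n with
  | zero => simp [wittPow, zero_pow hp]
  | succ n ih =>
    obtain ⟨ih₁, ih₂⟩ := ih
    simp only [wittPow, wittMul, mul_add, ih₂, natCast_mul_aeval hc, ih₁, ← add_one_mul,
      mul_pow]
    push_cast
    constructor <;> ring

lemma wittPow_prime_X (hp : 1 < p) (hc : (p : ℤ) • c = (X 0 + X 1) ^ p - X 0 ^ p - X 1 ^ p) :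
    wittPow c (Polynomial ℤ) (Polynomial.X, 0) p
      = ((p : Polynomial ℤ) * Polynomial.X,
        ((p : Polynomial ℤ) ^ (p - 1) - 1) * Polynomial.X ^ p) := by
  obtain ⟨h₁, h₂⟩ := wittPow_X (by omega) hc p
  have hp₀ : (p : Polynomial ℤ) ≠ 0 := Nat.cast_ne_zero.mpr (by omega)
  refine Prod.ext h₁ (mul_left_cancel₀ hp₀ ?_)
  rw [h₂, ← mul_assoc, mul_sub, ← pow_succ', Nat.sub_add_cancel hp.le, mul_one]

/-- Computed over `ℤ[X]`, where `p` can be cancelled, and transported along `X ↦ a`. -/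
lemma wittPow_prime_of_natCast_eq_zero (hp : 1 < p)
    (hc : (p : ℤ) • c = (X 0 + X 1) ^ p - X 0 ^ p - X 1 ^ p)
    {A : Type} [CommRing A] (hpA : (p : A) = 0) (a : A) :
    wittPow c A (a, 0) p = (0, -a ^ p) := by
  let f : Polynomial ℤ →+* A := Polynomial.eval₂RingHom (Int.castRingHom A) a
  have hf : Prod.map f f (Polynomial.X, 0) = (a, 0) := by simp [f]
  rw [← hf, map_wittPow, wittPow_prime_X hp hc]
  simp [f, Polynomial.eval₂_pow, hpA, zero_pow (Nat.sub_ne_zero_of_lt hp)]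

lemma not_injective_of_map_wittMul (hp : 1 < p)
    (hc : (p : ℤ) • c = (X 0 + X 1) ^ p - X 0 ^ p - X 1 ^ p)
    {A : Type} [CommRing A] (hpA : (p : A) = 0) {a : A} (ha : a ^ p ≠ 0)
    {G : Type} [AddGroup G] (hG : ∀ x : G, p • x = 0)
    (g : A × A → G) (hg : ∀ v w, g (wittMul c A v w) = g v + g w) :
    ¬ Function.Injective g := by
  intro hinj
  have hg₀ : g 0 = 0 := by
    simpa [wittMul_zero_zero (by omega : p ≠ 0) hc] using hg 0 0
  have hg_pow : ∀ n, g (wittPow c A (a, 0) n) = n • g (a, 0) := by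
    intro n
    induction n with
    | zero => rw [zero_smul]; exact hg₀
    | succ n ih => rw [wittPow, hg, ih, succ_nsmul]
  have hpow : wittPow c A (a, 0) p = 0 := hinj (by rw [hg_pow, hG, hg₀])
  rw [wittPow_prime_of_natCast_eq_zero hp hc hpA] at hpow
  exact ha (neg_eq_zero.mp (congrArg Prod.snd hpow))

def wittIsoAdd (hc : (p : ℤ) • c = (X 0 + X 1) ^ p - X 0 ^ p - X 1 ^ p)
    (R : Type) [CommRing R] (hu : IsUnit (p : R)) :
    PlaneGrpIso (wittMul c) (fun _ _ v w => v + w) R where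
  e A _ _ :=
    { toFun := fun v => (v.1, v.2 - algebraMap R A ↑hu.unit⁻¹ * v.1 ^ p)
      invFun := fun v => (v.1, v.2 + algebraMap R A ↑hu.unit⁻¹ * v.1 ^ p)
      left_inv := fun v => by simp
      right_inv := fun v => by simp }
  e_mul A _ _ v w := by
    have hinv : algebraMap R A ↑hu.unit⁻¹ * (p : A) = 1 := by
      rw [← map_natCast (algebraMap R A), ← map_mul, hu.val_inv_mul, map_one]
    have hval : aeval (fun i : Fin 2 => if i = 0 then v.1 else w.1) c
        = algebraMap R A ↑hu.unit⁻¹ * ((v.1 + w.1) ^ p - v.1 ^ p - w.1 ^ p) := by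
      rw [← natCast_mul_aeval hc, ← mul_assoc, hinv, one_mul]
    ext
    · rfl
    · simp only [wittMul, Equiv.coe_fn_mk, Prod.snd_add, hval]
      ring
  e_natural A A' _ _ _ _ f v := by
    ext
    · rfl
    · simp

lemma isUnit_of_planeGrpIso_add (hp : 1 < p)
    (hc : (p : ℤ) • c = (X 0 + X 1) ^ p - X 0 ^ p - X 1 ^ p) {R : Type} [CommRing R]
    (iso : PlaneGrpIso (wittMul c) (fun _ _ v w => v + w) R) : IsUnit (p : R) := by
  by_contra hu
  let k := R ⧸ Ideal.span {(p : R)}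
  have : Nontrivial k :=
    Ideal.Quotient.nontrivial_iff.mpr (by rwa [Ne, Ideal.span_singleton_eq_top])
  have hpk : (p : Polynomial k) = 0 := by
    rw [← map_natCast Polynomial.C, ← map_natCast (Ideal.Quotient.mk _),
      Ideal.Quotient.eq_zero_iff_mem.mpr (Ideal.mem_span_singleton_self _), map_zero]
  refine not_injective_of_map_wittMul hp hc hpk (Polynomial.monic_X_pow p).ne_zero
    (fun x => ?_) (iso.e (Polynomial k)) (iso.e_mul _) (iso.e _).injective
  ext <;> simp [hpk]

lemma isEmpty_planeGrpIso_wittMul {c' : MvPolynomial (Fin 2) ℤ} {q : ℕ} (hp : p.Prime)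
    (hq : q.Prime) (hpq : p ≠ q) (hc : (p : ℤ) • c = (X 0 + X 1) ^ p - X 0 ^ p - X 1 ^ p)
    (hc' : (q : ℤ) • c' = (X 0 + X 1) ^ q - X 0 ^ q - X 1 ^ q) :
    IsEmpty (PlaneGrpIso (wittMul c) (wittMul c') ℤ) := by
  refine ⟨fun iso => ?_⟩
  have : Fact p.Prime := ⟨hp⟩
  have hqu : IsUnit (q : ZMod p) := by
    rw [isUnit_iff_ne_zero, Ne, ZMod.natCast_eq_zero_iff, Nat.prime_dvd_prime_iff_eq hp hq]
    exact hpq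
  have hpu := isUnit_of_planeGrpIso_add hp.one_lt hc
    ((iso.baseChange (ZMod p)).trans (wittIsoAdd hc' _ hqu))
  simp at hpu

end WittLaw

lemma exists_natCast_smul_eq_add_pow_sub {p : ℕ} (hp : p.Prime) :
    ∃ c : MvPolynomial (Fin 2) ℤ, (p : ℤ) • c = (X 0 + X 1) ^ p - X 0 ^ p - X 1 ^ p := by
  have : Fact p.Prime := ⟨hp⟩
  have hdvd : C (p : ℤ) ∣ ((X 0 + X 1) ^ p - X 0 ^ p - X 1 ^ p : MvPolynomial (Fin 2) ℤ) := by
    rw [C_dvd_iff_zmod]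
    simp [add_pow_char]
  obtain ⟨c, hc⟩ := hdvd
  exact ⟨c, by rw [smul_eq_C_mul, hc]⟩

lemma infinite_quot_planeGrpIso_wittDatum :
    Infinite (Quot fun d d' : WittDatum =>
      Nonempty (PlaneGrpIso (wittMul d.1.2) (wittMul d'.1.2) ℤ)) := by
  have : Infinite {p : ℕ // p.Prime} := Nat.infinite_setOfPred_prime.to_subtype
  refine Infinite.of_surjective
    (Quot.lift (fun d => (⟨d.1.1, d.2.1⟩ : {p : ℕ // p.Prime})) ?_) fun p => ?_
  · rintro d d' ⟨iso⟩
    by_contra h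
    exact (isEmpty_planeGrpIso_wittMul d.2.1 d'.2.1 (by simpa using h) d.2.2 d'.2.2).false iso
  · obtain ⟨c, hc⟩ := exists_natCast_smul_eq_add_pow_sub p.2
    exact ⟨Quot.mk _ ⟨(p.1, c), p.2, hc⟩, rfl⟩

/-- For `W_p` the additive group scheme of Witt vectors of length two
over `ℤ` (the affine plane with group law
`(x,y)·(x',y') = (x + x', y + y' + ((x+x')^p − x^p − x'^p)/p)`):
(i) for a commutative ring `R`, the base change `W_p ×_ℤ R` is isomorphic to `𝔾ₐ²` as an
`R`-group scheme if and only if `p` is invertible in `R`;  consequently (ii) for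
distinct primes `p ≠ q` the group schemes `W_p` and `W_q` over `ℤ` are not isomorphic,
and (iii) there are infinitely many pairwise non-isomorphic such group schemes
(smooth commutative unipotent of dimension `2`) over `ℤ`. -/
theorem witt_vector_group_schemes
    (p q : ℕ) (hp : p.Prime) (hq : q.Prime) (c c' : MvPolynomial (Fin 2) ℤ)
    (hc : (p : ℤ) • c = (X 0 + X 1) ^ p - X 0 ^ p - X 1 ^ p)
    (hc' : (q : ℤ) • c' = (X 0 + X 1) ^ q - X 0 ^ q - X 1 ^ q) :
    (∀ (R : Type) [CommRing R],
        Nonempty (PlaneGrpIso (wittMul c) (fun A _ v w => v + w) R) ↔ IsUnit (p : R)) ∧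
    (p ≠ q → IsEmpty (PlaneGrpIso (wittMul c) (wittMul c') ℤ)) ∧
    Infinite (Quot (fun (d d' : WittDatum) =>
      Nonempty (PlaneGrpIso (wittMul d.1.2) (wittMul d'.1.2) ℤ))) :=
  ⟨fun R _ => ⟨fun ⟨iso⟩ => isUnit_of_planeGrpIso_add hp.one_lt hc iso,
      fun hu => ⟨wittIsoAdd hc R hu⟩⟩,
    fun hpq => isEmpty_planeGrpIso_wittMul hp hq hpq hc hc',
    infinite_quot_planeGrpIso_wittDatum⟩
end
end

section
/- For λ ∈ Z, let u_λ be the 7-dimensional nilpotent Lie algebra over Z with basis x_1,…,x_7 and nonzero brackets [x_1, x_i] = x_{i+1} for 2 ≤ i ≤ 6, [x_2, x_3] = x_5, [x_2, x_4] = x_6, [x_2, x_5] = λ x_7, and [x_3, x_4] = (1 − λ) x_7. Then for distinct integers λ and μ, the base-changed Lie algebras u_λ ⊗ Q̄ and u_μ ⊗ Q̄ over an algebraic closure Q̄ of Q are not isomorphic as Lie algebras. -/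
/-- Structure constants (upper-triangular part) of the 7-dimensional nilpotent Lie
algebras `u_λ` (label `123457_I` in Seeley's classification).  With `x_i` denoting the
basis vector indexed by `i - 1 : Fin 7`, the nonzero brackets are
`[x₁, xᵢ] = x_{i+1}` for `2 ≤ i ≤ 6`, `[x₂, x₃] = x₅`, `[x₂, x₄] = x₆`,
`[x₂, x₅] = λ • x₇` and `[x₃, x₄] = (1 − λ) • x₇`. -/
def uRow (lam : ℤ) : Fin 7 → Fin 7 → Fin 7 → ℤ
  | 0, 1 => Pi.single 2 1
  | 0, 2 => Pi.single 3 1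
  | 0, 3 => Pi.single 4 1
  | 0, 4 => Pi.single 5 1
  | 0, 5 => Pi.single 6 1
  | 1, 2 => Pi.single 4 1
  | 1, 3 => Pi.single 5 1
  | 1, 4 => Pi.single 6 lam
  | 2, 3 => Pi.single 6 (1 - lam)
  | _, _ => 0

/-- The full (antisymmetrised) structure constants of the Lie algebra `u_λ`:
`⁅x_i, x_j⁆ = ∑ k, uStruct λ i j k • x_k`. -/
def uStruct (lam : ℤ) (i j k : Fin 7) : ℤ := uRow lam i j k - uRow lam j i k

/-!
Give the basis vector `x_k` weight `k`: the bracket of `u_λ` adds weights, so brackets can be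
computed on leading terms. An isomorphism `u_λ ≃ u_μ` sends `x₁, x₂` to elements `a, b` of `u_μ`
satisfying the same relations. As `ad x₂` raises weight by 2, `(ad x₂)⁴ = 0`, and this forces `b`
to have no `x₁`-component. If `α` and `β` are the coefficients of `a` at `x₁` and of `b` at `x₂`,
the leading coefficient of `(ad a)ᵏ b` is `αᵏβ`, and it is nonzero for `k = 5` because
`(ad x₁)⁵ x₂ = x₇ ≠ 0`. Comparing leading coefficients in `[x₂, [x₁, x₂]] = (ad x₁)³ x₂` gives
`β = α²`, and in `[x₂, (ad x₁)³ x₂] = λ (ad x₁)⁵ x₂` gives `μ α³β² = λ α⁵β`; hence `λ = μ`.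
-/

section StructureConstants

variable {R L ι : Type*} [CommRing R] [LieRing L] [LieAlgebra R L] [Fintype ι]

theorem Module.Basis.repr_lie_eq_sum {b : Module.Basis ι R L} {S : ι → ι → ι → R}
    (hb : ∀ i j, ⁅b i, b j⁆ = ∑ k, S i j k • b k) (v w : L) (k : ι) :
    b.repr ⁅v, w⁆ k = ∑ i, ∑ j, b.repr v i * b.repr w j * S i j k := by
  classical
  conv_lhs => rw [← b.sum_repr v, ← b.sum_repr w]
  simp only [sum_lie, lie_sum, smul_lie, lie_smul, hb, map_sum, map_smul, Finsupp.coe_finsetSum,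
    Finset.sum_apply, Finsupp.coe_smul, Pi.smul_apply, Module.Basis.repr_self,
    Finsupp.single_apply, smul_eq_mul, mul_ite, mul_one, mul_zero, Finset.sum_ite_eq',
    Finset.mem_univ, if_true, Finset.mul_sum]
  rw [Finset.sum_comm]
  refine Finset.sum_congr rfl fun i _ => Finset.sum_congr rfl fun j _ => ?_
  ring

end StructureConstants

section Graded

variable {R L : Type*} [CommRing R] [LieRing L] [LieAlgebra R L] {n : ℕ}

/-- The basis vector `b i` has weight `i + 1` and the bracket adds weights. -/
def IsWeightGraded (S : Fin n → Fin n → Fin n → R) : Prop :=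
  ∀ i j k, S i j k ≠ 0 → (k : ℕ) = i + j + 1

def VanishesBelow (b : Module.Basis (Fin n) R L) (p : ℕ) (v : L) : Prop :=
  ∀ i : Fin n, (i : ℕ) < p → b.repr v i = 0

structure HasLeadingCoeff (b : Module.Basis (Fin n) R L) (k : Fin n) (c : R) (v : L) : Prop where
  vanishesBelow : VanishesBelow b k v
  repr_eq : b.repr v k = c

variable {b : Module.Basis (Fin n) R L} {S : Fin n → Fin n → Fin n → R}

theorem eq_zero_of_vanishesBelow {p : ℕ} {v : L} (hp : n ≤ p) (hv : VanishesBelow b p v) :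
    v = 0 :=
  b.ext_elem fun i => by simpa using hv i (by omega)

theorem IsWeightGraded.support_of_mul_ne_zero (hS : IsWeightGraded S) {p q : ℕ} {v w : L}
    (hv : VanishesBelow b p v) (hw : VanishesBelow b q w) {i j k : Fin n}
    (h : b.repr v i * b.repr w j * S i j k ≠ 0) : p ≤ i ∧ q ≤ j ∧ (k : ℕ) = i + j + 1 := by
  refine ⟨?_, ?_, hS i j k (right_ne_zero_of_mul h)⟩
  · by_contra hi
    simp [hv i (by omega)] at h
  · by_contra hj
    simp [hw j (by omega)] at h

theorem vanishesBelow_lie (hb : ∀ i j, ⁅b i, b j⁆ = ∑ k, S i j k • b k) (hS : IsWeightGraded S)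
    {p q : ℕ} {v w : L} (hv : VanishesBelow b p v) (hw : VanishesBelow b q w) :
    VanishesBelow b (p + q + 1) ⁅v, w⁆ := by
  intro k hk
  rw [b.repr_lie_eq_sum hb]
  refine Finset.sum_eq_zero fun i _ => Finset.sum_eq_zero fun j _ => ?_
  by_contra h
  have := hS.support_of_mul_ne_zero hv hw h
  omega

theorem HasLeadingCoeff.lie (hb : ∀ i j, ⁅b i, b j⁆ = ∑ k, S i j k • b k)
    (hS : IsWeightGraded S) {i j k : Fin n} {c d : R} {v w : L} (hv : HasLeadingCoeff b i c v)
    (hw : HasLeadingCoeff b j d w) (hk : (k : ℕ) = i + j + 1) :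
    HasLeadingCoeff b k (c * d * S i j k) ⁅v, w⁆ where
  vanishesBelow := hk ▸ vanishesBelow_lie hb hS hv.vanishesBelow hw.vanishesBelow
  repr_eq := by
    rw [b.repr_lie_eq_sum hb, Finset.sum_eq_single i, Finset.sum_eq_single j, hv.repr_eq,
      hw.repr_eq]
    · intro j' _ hj'
      by_contra h
      have := hS.support_of_mul_ne_zero hv.vanishesBelow hw.vanishesBelow h
      exact hj' (Fin.ext (by omega))
    · simp
    · intro i' _ hi'
      refine Finset.sum_eq_zero fun j' _ => ?_
      by_contra h
      have := hS.support_of_mul_ne_zero hv.vanishesBelow hw.vanishesBelow h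
      exact hi' (Fin.ext (by omega))
    · simp

theorem HasLeadingCoeff.smul {k : Fin n} {c : R} {v : L} (hv : HasLeadingCoeff b k c v) (r : R) :
    HasLeadingCoeff b k (r * c) (r • v) where
  vanishesBelow i hi := by simp [hv.vanishesBelow i hi]
  repr_eq := by simp [hv.repr_eq]

theorem HasLeadingCoeff.ne_zero {k : Fin n} {c : R} {v : L} (hv : HasLeadingCoeff b k c v)
    (hk : n = k + 1) (hv0 : v ≠ 0) : c ≠ 0 := by
  rintro rfl
  refine hv0 (b.ext_elem fun i => ?_)
  rcases (Nat.lt_or_eq_of_le (show (i : ℕ) ≤ k by omega)) with hi | hi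
  · simpa using hv.vanishesBelow i hi
  · simpa [Fin.ext hi] using hv.repr_eq

theorem HasLeadingCoeff.unique {k : Fin n} {c d : R} {v : L} (hc : HasLeadingCoeff b k c v)
    (hd : HasLeadingCoeff b k d v) : c = d :=
  hc.repr_eq.symm.trans hd.repr_eq

theorem hasLeadingCoeff_repr_zero [NeZero n] (v : L) : HasLeadingCoeff b 0 (b.repr v 0) v :=
  ⟨fun _ h => absurd h (Nat.not_lt_zero _), rfl⟩

theorem hasLeadingCoeff_basis (i : Fin n) : HasLeadingCoeff b i 1 (b i) where
  vanishesBelow j hj := by simp [Module.Basis.repr_self, Finsupp.single_apply, Fin.ext_iff]; omega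
  repr_eq := by simp

theorem lie_basis_eq_smul (hb : ∀ i j, ⁅b i, b j⁆ = ∑ k, S i j k • b k)
    (hS : IsWeightGraded S) {i j k : Fin n} (hk : (k : ℕ) = i + j + 1) :
    ⁅b i, b j⁆ = S i j k • b k := by
  rw [hb, Finset.sum_eq_single k]
  · intro k' _ hk'
    by_contra h
    exact hk' (Fin.ext ((hS i j k' (left_ne_zero_of_smul h)).trans hk.symm))
  · simp

end Graded

theorem uRow_eq_zero_of_ne (lam : ℤ) {i j k : Fin 7} (hk : (k : ℕ) ≠ i + j + 1) :
    uRow lam i j k = 0 := by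
  fin_cases i <;> fin_cases j <;> simp [uRow, Pi.single_apply] <;> rintro rfl <;> simp at hk

theorem isWeightGraded_uStruct (R : Type*) [CommRing R] (lam : ℤ) :
    IsWeightGraded fun i j k => (uStruct lam i j k : R) := by
  intro i j k h
  by_contra hk
  simp [uStruct, uRow_eq_zero_of_ne lam hk,
    uRow_eq_zero_of_ne lam (show (k : ℕ) ≠ j + i + 1 by omega)] at h

theorem uStruct_eq_one (lam : ℤ) :
    uStruct lam 0 1 2 = 1 ∧ uStruct lam 0 2 3 = 1 ∧ uStruct lam 0 3 4 = 1 ∧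
      uStruct lam 0 4 5 = 1 ∧ uStruct lam 0 5 6 = 1 ∧ uStruct lam 1 2 4 = 1 := by
  simp [uStruct, uRow]

theorem uStruct_one_four_six (lam : ℤ) : uStruct lam 1 4 6 = lam := by
  simp [uStruct, uRow]

/-- Relations satisfied by the generators `x₁, x₂` of `u_c`; up to isomorphism they pin down `c`. -/
structure URelations {R L : Type*} [CommRing R] [LieRing L] [LieAlgebra R L] (c : R) (x y : L) :
    Prop where
  lie_lie_eq : ⁅y, ⁅x, y⁆⁆ = ⁅x, ⁅x, ⁅x, y⁆⁆⁆
  lie_lie_lie_lie_eq : ⁅y, ⁅x, ⁅x, ⁅x, y⁆⁆⁆⁆ = c • ⁅x, ⁅x, ⁅x, ⁅x, ⁅x, y⁆⁆⁆⁆⁆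
  ne_zero : ⁅x, ⁅x, ⁅x, ⁅x, ⁅x, y⁆⁆⁆⁆⁆ ≠ 0
  ad_pow_four : ∀ z : L, ⁅y, ⁅y, ⁅y, ⁅y, z⁆⁆⁆⁆ = 0

section URelations

variable {R L M : Type*} [CommRing R] [LieRing L] [LieAlgebra R L] [LieRing M] [LieAlgebra R M]

theorem URelations.map {c : R} {x y : L} (h : URelations c x y) (e : L ≃ₗ⁅R⁆ M) :
    URelations c (e x) (e y) where
  lie_lie_eq := by simpa only [LieEquiv.map_lie] using congrArg e h.lie_lie_eq
  lie_lie_lie_lie_eq := by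
    simpa only [LieEquiv.map_lie, map_smul] using congrArg e h.lie_lie_lie_lie_eq
  ne_zero := by
    simpa only [LieEquiv.map_lie] using (map_ne_zero_iff e e.injective).mpr h.ne_zero
  ad_pow_four z := by
    simpa only [LieEquiv.map_lie, LieEquiv.apply_symm_apply, map_zero] using
      congrArg e (h.ad_pow_four (e.symm z))

theorem uRelations_basis [Nontrivial R] {lam : ℤ} {b : Module.Basis (Fin 7) R L}
    (hb : ∀ i j, ⁅b i, b j⁆ = ∑ k, (uStruct lam i j k : R) • b k) :
    URelations (lam : R) (b 0) (b 1) := by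
  have hS := isWeightGraded_uStruct R lam
  have lie_eq (i j k : Fin 7) (hk : (k : ℕ) = i + j + 1) :
      ⁅b i, b j⁆ = (uStruct lam i j k : R) • b k :=
    lie_basis_eq_smul hb hS hk
  have h01 : ⁅b 0, b 1⁆ = b 2 := by simpa [uStruct_eq_one] using lie_eq 0 1 2 rfl
  have h02 : ⁅b 0, b 2⁆ = b 3 := by simpa [uStruct_eq_one] using lie_eq 0 2 3 rfl
  have h03 : ⁅b 0, b 3⁆ = b 4 := by simpa [uStruct_eq_one] using lie_eq 0 3 4 rfl
  have h04 : ⁅b 0, b 4⁆ = b 5 := by simpa [uStruct_eq_one] using lie_eq 0 4 5 rfl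
  have h05 : ⁅b 0, b 5⁆ = b 6 := by simpa [uStruct_eq_one] using lie_eq 0 5 6 rfl
  have h12 : ⁅b 1, b 2⁆ = b 4 := by simpa [uStruct_eq_one] using lie_eq 1 2 4 rfl
  have h14 : ⁅b 1, b 4⁆ = (lam : R) • b 6 := by
    simpa [uStruct_one_four_six] using lie_eq 1 4 6 rfl
  have hb1 := (hasLeadingCoeff_basis (b := b) 1).vanishesBelow
  refine ⟨?_, ?_, ?_, fun z => ?_⟩
  · rw [h01, h12, h02, h03]
  · rw [h01, h02, h03, h14, h04, h05]
  · rw [h01, h02, h03, h04, h05]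
    exact b.ne_zero 6
  · have hz := (hasLeadingCoeff_repr_zero (b := b) z).vanishesBelow
    exact eq_zero_of_vanishesBelow (b := b) (p := 8) (by norm_num) <|
      vanishesBelow_lie hb hS hb1 <| vanishesBelow_lie hb hS hb1 <|
        vanishesBelow_lie hb hS hb1 <| vanishesBelow_lie hb hS hb1 hz

theorem URelations.eq_of_basis [IsDomain R] {mu : ℤ} {b : Module.Basis (Fin 7) R M}
    (hb : ∀ i j, ⁅b i, b j⁆ = ∑ k, (uStruct mu i j k : R) • b k) {c : R} {x y : M}
    (h : URelations c x y) : c = mu := by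
  have hS := isWeightGraded_uStruct R mu
  have hy0 : b.repr y 0 = 0 := by
    have hy := hasLeadingCoeff_repr_zero (b := b) y
    have h2 := hy.lie hb hS (hasLeadingCoeff_basis 1) (k := 2) rfl
    have h3 := hy.lie hb hS h2 (k := 3) rfl
    have h4 := hy.lie hb hS h3 (k := 4) rfl
    have h5 := hy.lie hb hS h4 (k := 5) rfl
    rw [h.ad_pow_four] at h5
    simpa [uStruct_eq_one, eq_comm] using h5.repr_eq
  set α := b.repr x 0
  set β := b.repr y 1
  have hx : HasLeadingCoeff b 0 α x := hasLeadingCoeff_repr_zero x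
  have hy : HasLeadingCoeff b 1 β y := by
    refine ⟨fun i hi => ?_, rfl⟩
    obtain rfl : i = 0 := Fin.ext (by omega)
    exact hy0
  have h2 := hx.lie hb hS hy (k := 2) rfl
  have h3 := hx.lie hb hS h2 (k := 3) rfl
  have h4 := hx.lie hb hS h3 (k := 4) rfl
  have h4' := hy.lie hb hS h2 (k := 4) rfl
  have h5 := hx.lie hb hS h4 (k := 5) rfl
  have h6 := hx.lie hb hS h5 (k := 6) rfl
  have h6' := hy.lie hb hS h4 (k := 6) rfl
  rw [h.lie_lie_eq] at h4'
  rw [h.lie_lie_lie_lie_eq] at h6'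
  have e1 := h4'.unique h4
  have e2 := h6'.unique (h6.smul c)
  have hne := h6.ne_zero rfl h.ne_zero
  simp only [uStruct_eq_one, uStruct_one_four_six, Int.cast_one, mul_one] at e1 e2 hne
  have hα : α ≠ 0 := left_ne_zero_of_mul hne
  have hβ : β ≠ 0 := by simpa [hα] using hne
  have hβα : β = α ^ 2 := mul_left_cancel₀ (mul_ne_zero hα hβ) (by linear_combination e1)
  exact mul_right_cancel₀ hne (by linear_combination -e2 + (mu : R) * α ^ 3 * β * hβα)

end URelations

theorem nilpotent_lie_algebras_pairwise_nonisomorphic_general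
    (Qbar : Type) [Field Qbar] [Algebra ℚ Qbar]
    (lam mu : ℤ) (hlm : lam ≠ mu)
    (L M : Type) [LieRing L] [LieAlgebra Qbar L] [LieRing M] [LieAlgebra Qbar M]
    (bL : Module.Basis (Fin 7) Qbar L) (bM : Module.Basis (Fin 7) Qbar M)
    (hL : ∀ i j : Fin 7, ⁅bL i, bL j⁆ = ∑ k : Fin 7, (uStruct lam i j k : Qbar) • bL k)
    (hM : ∀ i j : Fin 7, ⁅bM i, bM j⁆ = ∑ k : Fin 7, (uStruct mu i j k : Qbar) • bM k) :
    IsEmpty (L ≃ₗ⁅Qbar⁆ M) := by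
  have : CharZero Qbar := charZero_of_injective_algebraMap (algebraMap ℚ Qbar).injective
  exact ⟨fun e => hlm (Int.cast_injective (((uRelations_basis hL).map e).eq_of_basis hM))⟩

/-- For `λ ∈ ℤ` let `u_λ` be the 7-dimensional nilpotent Lie algebra
with basis `x₁, …, x₇` and nonzero brackets `[x₁, xᵢ] = x_{i+1}` (`2 ≤ i ≤ 6`),
`[x₂, x₃] = x₅`, `[x₂, x₄] = x₆`, `[x₂, x₅] = λx₇`, `[x₃, x₄] = (1 − λ)x₇`.
Then for distinct integers `λ ≠ μ` the base changes `u_λ ⊗ ℚ̄` and `u_μ ⊗ ℚ̄` to an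
algebraic closure `ℚ̄` of `ℚ` are not isomorphic as Lie algebras.  (Here `u_λ ⊗ ℚ̄` is
formalised as any Lie algebra over `ℚ̄` possessing a basis with the above structure
constants.) -/
theorem nilpotent_lie_algebras_pairwise_nonisomorphic
    (Qbar : Type) [Field Qbar] [Algebra ℚ Qbar] [IsAlgClosure ℚ Qbar]
    (lam mu : ℤ) (hlm : lam ≠ mu)
    (L M : Type) [LieRing L] [LieAlgebra Qbar L] [LieRing M] [LieAlgebra Qbar M]
    (bL : Module.Basis (Fin 7) Qbar L) (bM : Module.Basis (Fin 7) Qbar M)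
    (hL : ∀ i j : Fin 7, ⁅bL i, bL j⁆ = ∑ k : Fin 7, (uStruct lam i j k : Qbar) • bL k)
    (hM : ∀ i j : Fin 7, ⁅bM i, bM j⁆ = ∑ k : Fin 7, (uStruct mu i j k : Qbar) • bM k) :
    IsEmpty (L ≃ₗ⁅Qbar⁆ M) :=
  nilpotent_lie_algebras_pairwise_nonisomorphic_general Qbar lam mu hlm L M bL bM hL hM
end
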